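/- Let E = (-1/2,1/2)^{2n} × (-1/4,1/4) ⊂ H_n and Γ = ℤⁿ × ℤⁿ × ½ℤ. Then EE⁻¹ is disjoint from every conjugate of Γ \ {identity}: for all g ∈ H_n and all γ ∈ Γ with γ ≠ e, g⁻¹γg ∉ EE⁻¹. -/
import Mathlib


open scoped BigOperators
open Set

/-- Multiplication in the real Heisenberg group `H_n = ℝⁿ × ℝⁿ × ℝ`. -/
noncomputable def heisMul {n : ℕ} (g h : (Fin n → ℝ) × (Fin n → ℝ) × ℝ) :
    (Fin n → ℝ) × (Fin n → ℝ) × ℝ :=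
  (g.1 + h.1, g.2.1 + h.2.1,
    g.2.2 + h.2.2 + (1 / 2) * ((∑ i, g.1 i * h.2.1 i) - (∑ i, h.1 i * g.2.1 i)))

/-- Inversion in the Heisenberg group. -/
def heisInv {n : ℕ} (g : (Fin n → ℝ) × (Fin n → ℝ) × ℝ) :
    (Fin n → ℝ) × (Fin n → ℝ) × ℝ :=
  (-g.1, -g.2.1, -g.2.2)

/-- The lattice `Γ = ℤⁿ × ℤⁿ × ½ℤ` inside `H_n`. -/
def heisGamma (n : ℕ) : Set ((Fin n → ℝ) × (Fin n → ℝ) × ℝ) :=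
  {g | (∀ i, ∃ k : ℤ, g.1 i = k) ∧ (∀ i, ∃ k : ℤ, g.2.1 i = k) ∧ ∃ k : ℤ, g.2.2 = k / 2}

/-- The set `E = (-1/2,1/2)^{2n} × (-1/4,1/4)` in `H_n`. -/
def heisE (n : ℕ) : Set ((Fin n → ℝ) × (Fin n → ℝ) × ℝ) :=
  {g | (∀ i, g.1 i ∈ Ioo (-(1:ℝ)/2) (1/2)) ∧ (∀ i, g.2.1 i ∈ Ioo (-(1:ℝ)/2) (1/2)) ∧
    g.2.2 ∈ Ioo (-(1:ℝ)/4) (1/4)}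

/-- `E` is a `(H_n, Γ)` reproducing set: `EE⁻¹` is disjoint from every conjugate of
`Γ \ {e}`. -/
theorem heisE_reproducing (n : ℕ)
    (g γ : (Fin n → ℝ) × (Fin n → ℝ) × ℝ) (hγ : γ ∈ heisGamma n)
    (hγne : γ ≠ ((0 : Fin n → ℝ), (0 : Fin n → ℝ), (0 : ℝ)))
    (u v : (Fin n → ℝ) × (Fin n → ℝ) × ℝ) (hu : u ∈ heisE n) (hv : v ∈ heisE n) :
    heisMul (heisMul (heisInv g) γ) g ≠ heisMul u (heisInv v) := by
  intro h
  obtain ⟨ha, hb, hc⟩ := hγ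
  obtain ⟨hu1, hu2, hu3⟩ := hu
  obtain ⟨hv1, hv2, hv3⟩ := hv
  have h1 := congrArg Prod.fst h
  have h2 := congrArg (fun p : (Fin n → ℝ) × (Fin n → ℝ) × ℝ => p.2.1) h
  have h3 := congrArg (fun p : (Fin n → ℝ) × (Fin n → ℝ) × ℝ => p.2.2) h
  simp only [heisMul, heisInv] at h1 h2 h3
  -- first component: γ.1 = 0
  have ha0 : γ.1 = 0 := by
    funext i
    obtain ⟨k, hk⟩ := ha i
    have := congrFun h1 i
    simp only [Pi.add_apply, Pi.neg_apply, Pi.zero_apply] at this ⊢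
    have hui := hu1 i; have hvi := hv1 i
    simp only [mem_Ioo] at hui hvi
    have hkb : |(k : ℝ)| < 1 := by
      rw [← hk]
      rw [abs_lt]
      constructor <;> nlinarith [this]
    have : k = 0 := by
      rw [← Int.cast_abs] at hkb
      exact_mod_cast abs_eq_zero.mp (le_antisymm (by exact_mod_cast Int.lt_add_one_iff.mp (by exact_mod_cast hkb)) (abs_nonneg k))
    rw [hk, this]; simp
  have hb0 : γ.2.1 = 0 := by
    funext i
    obtain ⟨k, hk⟩ := hb i
    have := congrFun h2 i
    simp only [Pi.add_apply, Pi.neg_apply, Pi.zero_apply] at this ⊢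
    have hui := hu2 i; have hvi := hv2 i
    simp only [mem_Ioo] at hui hvi
    have hkb : |(k : ℝ)| < 1 := by
      rw [← hk, abs_lt]
      constructor <;> nlinarith [this]
    have : k = 0 := by
      rw [← Int.cast_abs] at hkb
      exact_mod_cast abs_eq_zero.mp (le_antisymm (by exact_mod_cast Int.lt_add_one_iff.mp (by exact_mod_cast hkb)) (abs_nonneg k))
    rw [hk, this]; simp
  have huv1 : u.1 = v.1 := by
    funext i
    have := congrFun h1 i
    have h0 := congrFun ha0 i
    simp only [Pi.add_apply, Pi.neg_apply, Pi.zero_apply] at this h0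
    linarith [this, h0]
  have huv2 : u.2.1 = v.2.1 := by
    funext i
    have := congrFun h2 i
    have h0 := congrFun hb0 i
    simp only [Pi.add_apply, Pi.neg_apply, Pi.zero_apply] at this h0
    linarith [this, h0]
  -- third component
  rw [ha0, hb0, huv1, huv2] at h3
  simp only [Pi.add_apply, Pi.zero_apply, Pi.neg_apply, add_zero, neg_mul, mul_neg,
    neg_neg, sub_self, mul_zero, zero_mul, neg_zero] at h3
  obtain ⟨k, hk⟩ := hc
  simp only [mem_Ioo] at hu3 hv3
  have hceq : γ.2.2 = u.2.2 - v.2.2 := by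
    have hsum : (∑ i, v.1 i * v.2.1 i) - (∑ i, v.1 i * v.2.1 i) = 0 := sub_self _
    nlinarith [h3]
  have hkb : |(k : ℝ)| < 1 := by
    rw [abs_lt]
    constructor <;> nlinarith [hceq, hk.symm.trans hceq]
  have hk0 : k = 0 := by
    rw [← Int.cast_abs] at hkb
    exact_mod_cast abs_eq_zero.mp (le_antisymm (by exact_mod_cast Int.lt_add_one_iff.mp (by exact_mod_cast hkb)) (abs_nonneg k))
  apply hγne
  have hc0 : γ.2.2 = 0 := by rw [hk, hk0]; norm_num
  exact Prod.ext ha0 (Prod.ext hb0 hc0)
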